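/- Let d ≥ 1 and p ≥ 1 be integers, let μ be a finite signed Borel measure on S^{d−1} × ℝ, let v = (v_1,…,v_p) with v_k ∈ ℝ^d, c ∈ ℝ, and let f = H^p_{μ,v,c}. Then there exists a sequence of discrete measures μ_n on S^{d−1} × ℝ (each of the form μ_n = ∑_{i=1}^{k_n} a_i·ψ(b_i)·δ_{(w_i,b_i)} with a_i ∈ ℝ, (w_i,b_i) ∈ S^{d−1} × ℝ) such that ‖μ_n‖_{M¹(1/ψ)} ≤ ‖μ‖_{M¹(1/ψ)} for every n and H^p_{μ_n,v,c}(x) → f(x) as n → ∞ for every x ∈ ℝ^d. -/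

import Mathlib

open MeasureTheory
open scoped RealInnerProductSpace ENNReal

/-- The unit sphere `S^{d-1} ⊆ ℝ^d`. -/
abbrev Sph (d : ℕ) := {w : EuclideanSpace ℝ (Fin d) // ‖w‖ = 1}

/-- The RePU activation `[t]₊^p = max(t,0)^p`. -/
noncomputable def repu (p : ℕ) (t : ℝ) : ℝ := (max t 0) ^ p

/-- The weight `ψ(b) = 1 + |b|^{p-1}`. -/
noncomputable def ψ (p : ℕ) (b : ℝ) : ℝ := 1 + |b| ^ (p - 1)

/-- Integral of a function against a finite signed measure, via the Jordan decomposition. -/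
noncomputable def sintegral {α : Type*} [MeasurableSpace α]
    (μ : SignedMeasure α) (g : α → ℝ) : ℝ :=
  (∫ x, g x ∂μ.toJordanDecomposition.posPart) - (∫ x, g x ∂μ.toJordanDecomposition.negPart)

/-- The infinite-width RePU network `H^p_{μ,c}`. -/
noncomputable def Hnet (d p : ℕ) (μ : SignedMeasure (Sph d × ℝ)) (c : ℝ)
    (x : EuclideanSpace ℝ (Fin d)) : ℝ :=
  sintegral μ (fun z : Sph d × ℝ =>
    (repu p (⟪(z.1 : EuclideanSpace ℝ (Fin d)), x⟫ - z.2) - repu p (-z.2)) / ψ p z.2) + c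

/-- The monomial-units term `∑_{k=1}^p ⟨v_k, x^{∘k}⟩`, where `x^{∘k}` is the entrywise
`k`-th power of `x`; here `v k` carries the weight of the power `k+1`. -/
noncomputable def monom (d p : ℕ) (v : Fin p → EuclideanSpace ℝ (Fin d))
    (x : EuclideanSpace ℝ (Fin d)) : ℝ :=
  ∑ k : Fin p, ∑ i : Fin d, v k i * x i ^ ((k : ℕ) + 1)

/-- The infinite-width RePU network with monomial units `H^p_{μ,v,c}`. -/
noncomputable def Hfull (d p : ℕ) (μ : SignedMeasure (Sph d × ℝ))
    (v : Fin p → EuclideanSpace ℝ (Fin d)) (c : ℝ) (x : EuclideanSpace ℝ (Fin d)) : ℝ :=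
  Hnet d p μ c x + monom d p v x

/-- The weighted total variation norm `‖μ‖_{M¹(1/ψ)} = ∫ ψ(b)⁻¹ d|μ|(w,b)`. -/
noncomputable def wnorm (d p : ℕ) (μ : SignedMeasure (Sph d × ℝ)) : ℝ :=
  ∫ z : Sph d × ℝ, (ψ p z.2)⁻¹ ∂μ.totalVariation

/-- The involution `σ(w,b) = (-w,-b)` on `S^{d-1} × ℝ`. -/
noncomputable def negPair (d : ℕ) (z : Sph d × ℝ) : Sph d × ℝ :=
  (⟨-(z.1 : EuclideanSpace ℝ (Fin d)), by rw [norm_neg]; exact z.1.2⟩, -z.2)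

lemma one_le_psi (p : ℕ) (b : ℝ) : 1 ≤ ψ p b := by
  have : (0:ℝ) ≤ |b| ^ (p-1) := pow_nonneg (abs_nonneg b) _
  unfold ψ; linarith

lemma psi_pos (p : ℕ) (b : ℝ) : 0 < ψ p b := lt_of_lt_of_le one_pos (one_le_psi p b)

lemma abs_repu_sub_repu (p : ℕ) (u u' : ℝ) :
    |repu p u - repu p u'| ≤ p * max |u| |u'| ^ (p-1) * |u - u'| := by
  set a := max u 0 with ha
  set c := max u' 0 with hc
  have ha0 : 0 ≤ a := le_max_right _ _
  have hc0 : 0 ≤ c := le_max_right _ _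
  set m := max |u| |u'| with hm
  have ham : a ≤ m := le_trans (max_le (le_abs_self u) (abs_nonneg u)) (le_max_left _ _)
  have hcm : c ≤ m := le_trans (max_le (le_abs_self u') (abs_nonneg u')) (le_max_right _ _)
  have hac : |a - c| ≤ |u - u'| := by
    have := abs_max_sub_max_le_max u 0 u' 0
    simpa using this
  have key : a ^ p - c ^ p = (∑ i ∈ Finset.range p, a ^ i * c ^ (p - 1 - i)) * (a - c) :=
    (geom_sum₂_mul a c p).symm
  have hterm : |∑ i ∈ Finset.range p, a ^ i * c ^ (p - 1 - i)| ≤ p * m ^ (p-1) := by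
    calc |∑ i ∈ Finset.range p, a ^ i * c ^ (p - 1 - i)|
        ≤ ∑ i ∈ Finset.range p, |a ^ i * c ^ (p - 1 - i)| := Finset.abs_sum_le_sum_abs _ _
      _ ≤ ∑ _i ∈ Finset.range p, m ^ (p-1) := by
          apply Finset.sum_le_sum
          intro i hi
          rw [Finset.mem_range] at hi
          have h1 : a ^ i * c ^ (p-1-i) ≤ m ^ i * m ^ (p-1-i) :=
            mul_le_mul (pow_le_pow_left₀ ha0 ham i) (pow_le_pow_left₀ hc0 hcm _)
              (pow_nonneg hc0 _) (pow_nonneg (ha0.trans ham) _)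
          rw [abs_of_nonneg (mul_nonneg (pow_nonneg ha0 _) (pow_nonneg hc0 _)), ← pow_add] at *
          have : i + (p - 1 - i) = p - 1 := by omega
          rwa [this] at h1
      _ = p * m ^ (p-1) := by simp [mul_comm]
  calc |repu p u - repu p u'| = |a ^ p - c ^ p| := rfl
    _ = |∑ i ∈ Finset.range p, a ^ i * c ^ (p - 1 - i)| * |a - c| := by rw [key, abs_mul]
    _ ≤ (p * m ^ (p-1)) * |u - u'| := by
        apply mul_le_mul hterm hac (abs_nonneg _)
        positivity

noncomputable def Gfun (d p : ℕ) (x : EuclideanSpace ℝ (Fin d)) (z : Sph d × ℝ) : ℝ :=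
  repu p (⟪(z.1 : EuclideanSpace ℝ (Fin d)), x⟫ - z.2) - repu p (-z.2)

noncomputable def gfun (d p : ℕ) (x : EuclideanSpace ℝ (Fin d)) (z : Sph d × ℝ) : ℝ :=
  Gfun d p x z / ψ p z.2

lemma continuous_Gfun (d p : ℕ) (x : EuclideanSpace ℝ (Fin d)) : Continuous (Gfun d p x) := by
  have hrepu : Continuous (repu p) := (continuous_id.max continuous_const).pow p
  have h1 : Continuous (fun z : Sph d × ℝ => ⟪(z.1 : EuclideanSpace ℝ (Fin d)), x⟫) :=
    (continuous_subtype_val.comp continuous_fst).inner continuous_const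
  exact (hrepu.comp (h1.sub continuous_snd)).sub (hrepu.comp continuous_snd.neg)

lemma continuous_gfun (d p : ℕ) (x : EuclideanSpace ℝ (Fin d)) : Continuous (gfun d p x) := by
  apply (continuous_Gfun d p x).div
  · exact (continuous_const.add ((continuous_abs.comp continuous_snd).pow _))
  · exact fun z => (psi_pos p z.2).ne'

lemma abs_inner_le (d : ℕ) (x : EuclideanSpace ℝ (Fin d)) (w : Sph d) :
    |⟪(w : EuclideanSpace ℝ (Fin d)), x⟫| ≤ ‖x‖ := by
  have := abs_real_inner_le_norm (w : EuclideanSpace ℝ (Fin d)) x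
  rwa [w.2, one_mul] at this

lemma abs_Gfun_le (d p : ℕ) (x : EuclideanSpace ℝ (Fin d)) (z : Sph d × ℝ) :
    |Gfun d p x z| ≤ p * (‖x‖ + |z.2|) ^ (p-1) * ‖x‖ := by
  set s := ⟪(z.1 : EuclideanSpace ℝ (Fin d)), x⟫ with hs
  have hsx : |s| ≤ ‖x‖ := abs_inner_le d x z.1
  have h := abs_repu_sub_repu p (s - z.2) (-z.2)
  have h2 : max |s - z.2| |(-z.2)| ≤ ‖x‖ + |z.2| := by
    apply max_le
    · calc |s - z.2| ≤ |s| + |z.2| := abs_sub _ _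
        _ ≤ ‖x‖ + |z.2| := by linarith
    · rw [abs_neg]; linarith [abs_nonneg s, (abs_nonneg z.2), hsx]
      
  have h3 : |s - z.2 - -z.2| = |s| := by ring_nf
  calc |Gfun d p x z| ≤ p * max |s - z.2| |(-z.2)| ^ (p-1) * |s - z.2 - -z.2| := h
    _ ≤ p * (‖x‖ + |z.2|) ^ (p-1) * ‖x‖ := by
        rw [h3]
        apply mul_le_mul _ hsx (abs_nonneg s)
        · positivity
        · apply mul_le_mul_of_nonneg_left _ (Nat.cast_nonneg p)
          exact pow_le_pow_left₀ (le_trans (abs_nonneg _) (le_max_left _ _)) h2 _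

lemma one_add_pow_le (t : ℝ) (ht : 0 ≤ t) (q : ℕ) : (1+t)^q ≤ 2^q * (1+t^q) := by
  have h1 : (1+t) ≤ 2 * max 1 t := by
    rcases le_total 1 t with h | h
    · rw [max_eq_right h]; linarith
    · rw [max_eq_left h]; linarith
  calc (1+t)^q ≤ (2 * max 1 t)^q := pow_le_pow_left₀ (by linarith) h1 q
    _ = 2^q * (max 1 t)^q := mul_pow 2 _ q
    _ ≤ 2^q * (1 + t^q) := by
        apply mul_le_mul_of_nonneg_left _ (by positivity)
        rcases le_total 1 t with h | h
        · rw [max_eq_right h]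
          linarith
        · rw [max_eq_left h, one_pow]
          nlinarith [pow_nonneg ht q]

/-- Global bound for `gfun`. -/
noncomputable def Cb (p : ℕ) (x : EuclideanSpace ℝ (Fin d)) : ℝ :=
  p * ‖x‖ * ((1+‖x‖) * 2) ^ (p-1)

lemma Cb_nonneg (p : ℕ) (x : EuclideanSpace ℝ (Fin d)) : 0 ≤ Cb p x := by
  unfold Cb; positivity

lemma abs_gfun_le (d p : ℕ) (x : EuclideanSpace ℝ (Fin d)) (z : Sph d × ℝ) :
    |gfun d p x z| ≤ Cb p x := by
  have hψ := psi_pos p z.2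
  rw [gfun, abs_div, abs_of_pos hψ, div_le_iff₀ hψ]
  calc |Gfun d p x z| ≤ p * (‖x‖ + |z.2|) ^ (p-1) * ‖x‖ := abs_Gfun_le d p x z
    _ ≤ Cb p x * ψ p z.2 := by
        have h1 : (‖x‖ + |z.2|) ^ (p-1) ≤ (1+‖x‖)^(p-1) * (2^(p-1) * (1 + |z.2|^(p-1))) := by
          calc (‖x‖ + |z.2|) ^ (p-1) ≤ ((1+‖x‖) * (1+|z.2|)) ^ (p-1) := by
                apply pow_le_pow_left₀ (by positivity)
                nlinarith [norm_nonneg x, abs_nonneg z.2]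
            _ = (1+‖x‖)^(p-1) * (1+|z.2|)^(p-1) := mul_pow _ _ _
            _ ≤ (1+‖x‖)^(p-1) * (2^(p-1) * (1 + |z.2|^(p-1))) := by
                apply mul_le_mul_of_nonneg_left (one_add_pow_le _ (abs_nonneg _) _)
                positivity
        have hx : (0:ℝ) ≤ ‖x‖ := norm_nonneg x
        have hp : (0:ℝ) ≤ p := Nat.cast_nonneg p
        calc (p:ℝ) * (‖x‖ + |z.2|) ^ (p-1) * ‖x‖
            ≤ p * ((1+‖x‖)^(p-1) * (2^(p-1) * (1 + |z.2|^(p-1)))) * ‖x‖ := by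
              apply mul_le_mul_of_nonneg_right _ hx
              exact mul_le_mul_of_nonneg_left h1 hp
          _ = Cb p x * ψ p z.2 := by rw [Cb, ψ, mul_pow]; ring

/-- Oscillation bound on bounded strips. -/
lemma abs_Gfun_sub_le (d p : ℕ) (x : EuclideanSpace ℝ (Fin d)) {R : ℝ} (hR : 0 ≤ R)
    {z z' : Sph d × ℝ} (hb : |z.2| ≤ R) (hb' : |z'.2| ≤ R) :
    |Gfun d p x z - Gfun d p x z'| ≤ p * (‖x‖ + R) ^ (p-1) * (‖x‖ + 2) * dist z z' := by
  set s := ⟪(z.1 : EuclideanSpace ℝ (Fin d)), x⟫ with hs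
  set s' := ⟪(z'.1 : EuclideanSpace ℝ (Fin d)), x⟫ with hs'
  have hsx : |s| ≤ ‖x‖ := abs_inner_le d x z.1
  have hsx' : |s'| ≤ ‖x‖ := abs_inner_le d x z'.1
  have hss' : |s - s'| ≤ ‖x‖ * dist z z' := by
    have h1 : s - s' = ⟪(z.1 : EuclideanSpace ℝ (Fin d)) - (z'.1 : EuclideanSpace ℝ (Fin d)), x⟫ := by
      rw [inner_sub_left]
    have h2 : ‖(z.1 : EuclideanSpace ℝ (Fin d)) - (z'.1 : EuclideanSpace ℝ (Fin d))‖ ≤ dist z z' := by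
      rw [← dist_eq_norm, ← Subtype.dist_eq]
      rw [Prod.dist_eq]
      exact le_max_left _ _
    calc |s - s'| ≤ ‖(z.1 : EuclideanSpace ℝ (Fin d)) - (z'.1 : EuclideanSpace ℝ (Fin d))‖ * ‖x‖ := by
          rw [h1]; exact abs_real_inner_le_norm _ _
      _ ≤ dist z z' * ‖x‖ := mul_le_mul_of_nonneg_right h2 (norm_nonneg x)
      _ = ‖x‖ * dist z z' := mul_comm _ _
  have hbb' : |z.2 - z'.2| ≤ dist z z' := by
    rw [Prod.dist_eq, ← Real.dist_eq]
    exact le_max_right _ _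
  have hM : (0:ℝ) ≤ ‖x‖ + R := by positivity
  have key1 : |repu p (s - z.2) - repu p (s' - z'.2)| ≤
      p * (‖x‖ + R)^(p-1) * (|s - s'| + |z.2 - z'.2|) := by
    have h := abs_repu_sub_repu p (s - z.2) (s' - z'.2)
    have hmax : max |s - z.2| |s' - z'.2| ≤ ‖x‖ + R := by
      apply max_le
      · calc |s - z.2| ≤ |s| + |z.2| := abs_sub _ _
          _ ≤ ‖x‖ + R := by linarith
      · calc |s' - z'.2| ≤ |s'| + |z'.2| := abs_sub _ _
          _ ≤ ‖x‖ + R := by linarith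
    calc |repu p (s - z.2) - repu p (s' - z'.2)|
        ≤ p * max |s - z.2| |s' - z'.2| ^ (p-1) * |s - z.2 - (s' - z'.2)| := h
      _ ≤ p * (‖x‖ + R)^(p-1) * (|s - s'| + |z.2 - z'.2|) := by
          apply mul_le_mul
          · apply mul_le_mul_of_nonneg_left _ (Nat.cast_nonneg p)
            exact pow_le_pow_left₀ (le_trans (abs_nonneg _) (le_max_left _ _)) hmax _
          · calc |s - z.2 - (s' - z'.2)| = |(s - s') - (z.2 - z'.2)| := by ring_nf
              _ ≤ |s - s'| + |z.2 - z'.2| := abs_sub _ _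
          · exact abs_nonneg _
          · positivity
  have key2 : |repu p (-z.2) - repu p (-z'.2)| ≤ p * (‖x‖ + R)^(p-1) * |z.2 - z'.2| := by
    have h := abs_repu_sub_repu p (-z.2) (-z'.2)
    have hmax : max |(-z.2)| |(-z'.2)| ≤ ‖x‖ + R := by
      rw [abs_neg, abs_neg]
      exact max_le (by linarith [norm_nonneg x]) (by linarith [norm_nonneg x])
    calc |repu p (-z.2) - repu p (-z'.2)|
        ≤ p * max |(-z.2)| |(-z'.2)| ^ (p-1) * |(-z.2) - (-z'.2)| := h
      _ ≤ p * (‖x‖ + R)^(p-1) * |z.2 - z'.2| := by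
          have : |(-z.2) - (-z'.2)| = |z.2 - z'.2| := by rw [← abs_neg]; ring_nf
          rw [this]
          apply mul_le_mul_of_nonneg_right _ (abs_nonneg _)
          apply mul_le_mul_of_nonneg_left _ (Nat.cast_nonneg p)
          exact pow_le_pow_left₀ (le_trans (abs_nonneg _) (le_max_left _ _)) hmax _
  have expand : Gfun d p x z - Gfun d p x z' =
      (repu p (s - z.2) - repu p (s' - z'.2)) - (repu p (-z.2) - repu p (-z'.2)) := by
    rw [Gfun, Gfun]; ring
  calc |Gfun d p x z - Gfun d p x z'|
      ≤ |repu p (s - z.2) - repu p (s' - z'.2)| + |repu p (-z.2) - repu p (-z'.2)| := by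
        rw [expand]; exact abs_sub _ _
    _ ≤ p * (‖x‖ + R)^(p-1) * (|s - s'| + |z.2 - z'.2|) + p * (‖x‖ + R)^(p-1) * |z.2 - z'.2| :=
        add_le_add key1 key2
    _ ≤ p * (‖x‖ + R)^(p-1) * (‖x‖ * dist z z' + dist z z') + p * (‖x‖ + R)^(p-1) * dist z z' := by
        apply add_le_add
        · apply mul_le_mul_of_nonneg_left _ (by positivity)
          exact add_le_add hss' hbb'
        · exact mul_le_mul_of_nonneg_left hbb' (by positivity)
    _ = p * (‖x‖ + R) ^ (p-1) * (‖x‖ + 2) * dist z z' := by ring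

lemma integrable_of_bdd {α : Type*} [MeasurableSpace α] (m : Measure α) [IsFiniteMeasure m]
    {f : α → ℝ} (hf : AEStronglyMeasurable f m) {C : ℝ} (h : ∀ a, |f a| ≤ C) :
    Integrable f m := by
  apply (integrable_const C).mono' hf
  exact Filter.Eventually.of_forall (fun a => by rw [Real.norm_eq_abs]; exact h a)

lemma measurable_psi_inv (d p : ℕ) : Continuous (fun z : Sph d × ℝ => (ψ p z.2)⁻¹) := by
  apply Continuous.inv₀
  · exact continuous_const.add ((continuous_abs.comp continuous_snd).pow _)
  · exact fun z => (psi_pos p z.2).ne'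

lemma psi_inv_nonneg (p : ℕ) (b : ℝ) : 0 ≤ (ψ p b)⁻¹ := (inv_pos.mpr (psi_pos p b)).le

lemma abs_psi_inv_le (p : ℕ) (b : ℝ) : |(ψ p b)⁻¹| ≤ 1 := by
  rw [abs_of_nonneg (psi_inv_nonneg p b)]
  rw [inv_le_one_iff₀]
  right; exact one_le_psi p b

section Discrete
variable {α : Type*} [MeasurableSpace α] [MeasurableSingletonClass α]

noncomputable def dPos {k : ℕ} (cc : Fin k → ℝ) (zz : Fin k → α) : Measure α :=
  ∑ i, ENNReal.ofReal (cc i) • Measure.dirac (zz i)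

lemma dPos_apply {k : ℕ} (cc : Fin k → ℝ) (zz : Fin k → α) (A : Set α) :
    dPos cc zz A = ∑ i, ENNReal.ofReal (cc i) * Measure.dirac (zz i) A := by
  rw [dPos, Measure.finset_sum_apply]
  simp [Measure.smul_apply]

instance dPos_finite {k : ℕ} (cc : Fin k → ℝ) (zz : Fin k → α) :
    IsFiniteMeasure (dPos cc zz) := by
  constructor
  rw [dPos_apply]
  refine ENNReal.sum_lt_top.mpr (fun i _ => ?_)
  exact ENNReal.mul_lt_top ENNReal.ofReal_lt_top (by simp)

lemma signed_finset_sum_apply {ι : Type*} (s : Finset ι) (v : ι → SignedMeasure α)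
    (A : Set α) : (∑ i ∈ s, v i) A = ∑ i ∈ s, v i A := by
  classical
  induction s using Finset.induction_on with
  | empty => simp
  | insert _ _ ha ih =>
    rw [Finset.sum_insert ha, Finset.sum_insert ha, VectorMeasure.add_apply, ih]

lemma dPos_mutuallySingular {k : ℕ} (cc : Fin k → ℝ) (zz : Fin k → α)
    (hinj : Function.Injective zz) :
    dPos cc zz ⟂ₘ dPos (fun i => -(cc i)) zz := by
  set S : Set α := ⋃ i : Fin k, ⋃ (_ : 0 < cc i), {zz i} with hSdef
  have hSfin : S.Finite := Set.finite_iUnion (fun i => Set.finite_iUnion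
    (fun _ => Set.finite_singleton _))
  have hS : MeasurableSet S := hSfin.measurableSet
  have hmem : ∀ i, 0 < cc i → zz i ∈ S := by
    intro i hi
    exact Set.mem_iUnion.mpr ⟨i, Set.mem_iUnion.mpr ⟨hi, rfl⟩⟩
  have hnmem : ∀ i, cc i < 0 → zz i ∉ S := by
    intro i hi hmem'
    rw [hSdef] at hmem'
    simp only [Set.mem_iUnion, Set.mem_singleton_iff] at hmem'
    obtain ⟨j, hj, hij⟩ := hmem'
    rw [hinj hij] at hi
    exact absurd hj (not_lt.mpr hi.le)
  refine ⟨Sᶜ, hS.compl, ?_, ?_⟩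
  · rw [dPos_apply]
    apply Finset.sum_eq_zero
    intro i _
    rcases lt_or_ge 0 (cc i) with h | h
    · rw [Measure.dirac_apply]
      rw [Set.indicator_of_notMem (by simpa using hmem i h)]
      simp
    · rw [ENNReal.ofReal_eq_zero.mpr h, zero_mul]
  · rw [compl_compl, dPos_apply]
    apply Finset.sum_eq_zero
    intro i _
    rcases lt_or_ge (cc i) 0 with h | h
    · rw [Measure.dirac_apply, Set.indicator_of_notMem (hnmem i h)]
      simp
    · rw [ENNReal.ofReal_eq_zero.mpr (by linarith), zero_mul]

/-- The Jordan decomposition of a discrete signed measure with distinct atoms. -/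
noncomputable def dJordan {k : ℕ} (cc : Fin k → ℝ) (zz : Fin k → α)
    (hinj : Function.Injective zz) : JordanDecomposition α :=
  ⟨dPos cc zz, dPos (fun i => -(cc i)) zz, dPos_mutuallySingular cc zz hinj⟩

lemma dJordan_toSignedMeasure {k : ℕ} (cc : Fin k → ℝ) (zz : Fin k → α)
    (hinj : Function.Injective zz) :
    (dJordan cc zz hinj).toSignedMeasure
      = ∑ i, (cc i) • (Measure.dirac (zz i)).toSignedMeasure := by
  apply VectorMeasure.ext
  intro A hA
  rw [JordanDecomposition.toSignedMeasure, Measure.toSignedMeasure_sub_apply hA]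
  have hR : (∑ i, (cc i) • (Measure.dirac (zz i)).toSignedMeasure) A
      = ∑ i, cc i * ((Measure.dirac (zz i)) A).toReal := by
    rw [signed_finset_sum_apply]
    congr 1
    funext i
    rw [VectorMeasure.smul_apply, Measure.toSignedMeasure_apply_measurable hA, smul_eq_mul, measureReal_def]
  rw [hR]
  show ((dJordan cc zz hinj).posPart A).toReal - ((dJordan cc zz hinj).negPart A).toReal = _
  have h1 : (dJordan cc zz hinj).posPart = dPos cc zz := rfl
  have h2 : (dJordan cc zz hinj).negPart = dPos (fun i => -(cc i)) zz := rfl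
  rw [h1, h2, dPos_apply, dPos_apply]
  rw [ENNReal.toReal_sum (fun i _ => ENNReal.mul_ne_top ENNReal.ofReal_ne_top
    (measure_ne_top _ _)), ENNReal.toReal_sum (fun i _ => ENNReal.mul_ne_top
    ENNReal.ofReal_ne_top (measure_ne_top _ _))]
  rw [← Finset.sum_sub_distrib]
  congr 1
  funext i
  rw [ENNReal.toReal_mul, ENNReal.toReal_mul]
  rcases le_total 0 (cc i) with h | h
  · rw [ENNReal.toReal_ofReal h, ENNReal.ofReal_eq_zero.mpr (neg_nonpos.mpr h)]
    simp
  · rw [ENNReal.ofReal_eq_zero.mpr h, ENNReal.toReal_ofReal (neg_nonneg.mpr h)]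
    simp

lemma dJordan_eq {k : ℕ} (cc : Fin k → ℝ) (zz : Fin k → α)
    (hinj : Function.Injective zz) :
    (∑ i, (cc i) • (Measure.dirac (zz i)).toSignedMeasure).toJordanDecomposition
      = dJordan cc zz hinj := by
  rw [← dJordan_toSignedMeasure cc zz hinj,
    MeasureTheory.JordanDecomposition.toJordanDecomposition_toSignedMeasure]

end Discrete


section Discrete2
variable {α : Type*} [MeasurableSpace α] [MeasurableSingletonClass α]

lemma integrable_dPos {k : ℕ} (cc : Fin k → ℝ) (zz : Fin k → α) {g : α → ℝ}
    (hg : Measurable g) : Integrable g (dPos cc zz) := by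
  constructor
  · exact hg.aestronglyMeasurable
  · rw [hasFiniteIntegral_iff_norm, dPos, lintegral_finset_sum_measure]
    refine ENNReal.sum_lt_top.mpr (fun i _ => ?_)
    rw [lintegral_smul_measure,
      lintegral_dirac' _ (hg.norm.ennreal_ofReal)]
    exact ENNReal.mul_lt_top ENNReal.ofReal_lt_top ENNReal.ofReal_lt_top

lemma integral_dPos {k : ℕ} (cc : Fin k → ℝ) (zz : Fin k → α) {g : α → ℝ}
    (hg : Measurable g) : ∫ a, g a ∂(dPos cc zz) = ∑ i, (ENNReal.ofReal (cc i)).toReal * g (zz i) := by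
  rw [dPos, integral_finset_sum_measure]
  · congr 1
    funext i
    rw [integral_smul_measure, integral_dirac, smul_eq_mul]
  · intro i _
    apply Integrable.smul_measure _ ENNReal.ofReal_ne_top
    constructor
    · exact hg.aestronglyMeasurable
    · rw [hasFiniteIntegral_iff_norm,
        lintegral_dirac' _ (hg.norm.ennreal_ofReal)]
      exact ENNReal.ofReal_lt_top

lemma sintegral_discrete {k : ℕ} (cc : Fin k → ℝ) (zz : Fin k → α)
    (hinj : Function.Injective zz) {g : α → ℝ} (hg : Measurable g) :
    sintegral (∑ i, (cc i) • (Measure.dirac (zz i)).toSignedMeasure) g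
      = ∑ i, cc i * g (zz i) := by
  rw [sintegral, dJordan_eq cc zz hinj]
  have h1 : (dJordan cc zz hinj).posPart = dPos cc zz := rfl
  have h2 : (dJordan cc zz hinj).negPart = dPos (fun i => -(cc i)) zz := rfl
  rw [h1, h2, integral_dPos cc zz hg, integral_dPos (fun i => -(cc i)) zz hg,
    ← Finset.sum_sub_distrib]
  congr 1
  funext i
  rw [ENNReal.toReal_ofReal', ENNReal.toReal_ofReal', ← sub_mul]
  congr 1
  simpa using max_zero_sub_max_neg_zero_eq_self (cc i)

lemma totalVariation_discrete {k : ℕ} (cc : Fin k → ℝ) (zz : Fin k → α)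
    (hinj : Function.Injective zz) :
    (∑ i, (cc i) • (Measure.dirac (zz i)).toSignedMeasure).totalVariation
      = dPos cc zz + dPos (fun i => -(cc i)) zz := by
  rw [SignedMeasure.totalVariation, dJordan_eq cc zz hinj]
  rfl

lemma integral_totalVariation_discrete {k : ℕ} (cc : Fin k → ℝ) (zz : Fin k → α)
    (hinj : Function.Injective zz) {g : α → ℝ} (hg : Measurable g) :
    ∫ a, g a ∂(∑ i, (cc i) • (Measure.dirac (zz i)).toSignedMeasure).totalVariation
      = ∑ i, |cc i| * g (zz i) := by
  rw [totalVariation_discrete cc zz hinj, integral_add_measure, integral_dPos cc zz hg,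
    integral_dPos (fun i => -(cc i)) zz hg, ← Finset.sum_add_distrib]
  · congr 1
    funext i
    rw [ENNReal.toReal_ofReal', ENNReal.toReal_ofReal', ← add_mul]
    congr 1
    simpa using max_zero_add_max_neg_zero_eq_abs_self (cc i)
  · exact integrable_dPos cc zz hg
  · exact integrable_dPos _ zz hg

end Discrete2





instance sphBorel (d : ℕ) : BorelSpace (Sph d) := Subtype.borelSpace _

instance sphCompact (d : ℕ) : CompactSpace (Sph d) := by
  have h : IsCompact {w : EuclideanSpace ℝ (Fin d) | ‖w‖ = 1} := by
    have h2 := isCompact_sphere (0 : EuclideanSpace ℝ (Fin d)) 1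
    convert h2 using 1
    ext w
    simp [Metric.mem_sphere, dist_zero_right]
    ext w
    simp [Metric.mem_sphere, dist_zero_right]
  exact isCompact_iff_compactSpace.mp h

lemma Hnet_eq (d p : ℕ) (μ : SignedMeasure (Sph d × ℝ)) (c : ℝ) (x : EuclideanSpace ℝ (Fin d)) :
    Hnet d p μ c x = sintegral μ (gfun d p x) + c := rfl

lemma step (d p : ℕ) (hp : 1 ≤ p) (μ : SignedMeasure (Sph d × ℝ)) (n : ℕ) :
    ∃ ν : SignedMeasure (Sph d × ℝ),
      (∃ (k : ℕ) (a : Fin k → ℝ) (z : Fin k → Sph d × ℝ),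
        ν = ∑ i, (a i * ψ p (z i).2) • (Measure.dirac (z i)).toSignedMeasure) ∧
      wnorm d p ν ≤ wnorm d p μ ∧
      ∀ x : EuclideanSpace ℝ (Fin d),
        |sintegral ν (gfun d p x) - sintegral μ (gfun d p x)| ≤
          (p * (‖x‖ + 1) ^ (p-1) * (‖x‖ + 2) * wnorm d p μ) * (1/(n+1))
          + Cb p x * (μ.totalVariation {z : Sph d × ℝ | (n:ℝ) < |z.2|}).toReal := by
  classical
  set P := μ.toJordanDecomposition.posPart with hP
  set N := μ.toJordanDecomposition.negPart with hN
  set η : ℝ := 1/((n:ℝ)+1)^p with hηdef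
  have hη : 0 < η := by positivity
  have hη1 : η ≤ 1 := by
    rw [hηdef]
    rw [div_le_one (by positivity)]
    exact one_le_pow₀ (by push_cast; linarith)
  -- the compact strip
  set K : Set (Sph d × ℝ) := {z | |z.2| ≤ (n:ℝ)} with hKdef
  have hKm : MeasurableSet K := by
    have : K = (fun z : Sph d × ℝ => |z.2|) ⁻¹' (Set.Iic (n:ℝ)) := rfl
    rw [this]
    exact ((_root_.continuous_abs.comp continuous_snd).measurable) measurableSet_Iic
  have hKcomp : IsCompact K := by
    have : K = (Set.univ : Set (Sph d)) ×ˢ (Set.Icc (-(n:ℝ)) n) := by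
      ext z; simp [hKdef, abs_le, Set.mem_prod]
    rw [this]
    exact isCompact_univ.prod isCompact_Icc
  -- finite η-net
  obtain ⟨t, ht⟩ := hKcomp.elim_finite_subcover (fun z : Sph d × ℝ => Metric.ball z η)
    (fun z => Metric.isOpen_ball) (fun z hz => Set.mem_iUnion.mpr ⟨z, Metric.mem_ball_self hη⟩)
  set k := t.card with hk
  set zz : Fin k → Sph d × ℝ := fun i => (t.equivFin.symm i : Sph d × ℝ) with hzz
  have hinj : Function.Injective zz := fun i j hij => t.equivFin.symm.injective (Subtype.ext hij)
  -- the disjointified cells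
  set f : ℕ → Set (Sph d × ℝ) :=
    fun m => if h : m < k then K ∩ Metric.ball (zz ⟨m, h⟩) η else ∅ with hfdef
  have hfm : ∀ m, MeasurableSet (f m) := by
    intro m
    by_cases h : m < k
    · have : f m = K ∩ Metric.ball (zz ⟨m, h⟩) η := by rw [hfdef]; simp [h]
      rw [this]
      exact hKm.inter Metric.isOpen_ball.measurableSet
    · have : f m = ∅ := by rw [hfdef]; simp [h]
      rw [this]
      exact MeasurableSet.empty
  set A : Fin k → Set (Sph d × ℝ) := fun i => disjointed f i with hAdef
  have hAm : ∀ i, MeasurableSet (A i) := fun i => MeasurableSet.disjointed hfm i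
  have hAdis : Pairwise (Function.onFun Disjoint A) := fun i j hij =>
    disjoint_disjointed f (fun h => hij (Fin.val_injective h))
  have hfi : ∀ i : Fin k, f i = K ∩ Metric.ball (zz i) η := by
    intro i
    rw [hfdef]
    simp [i.isLt]
  have hAK : ∀ i, A i ⊆ K := fun i =>
    (disjointed_subset f i).trans (by rw [hfi i]; exact Set.inter_subset_left)
  have hAball : ∀ i, A i ⊆ Metric.ball (zz i) η := fun i =>
    (disjointed_subset f i).trans (by rw [hfi i]; exact Set.inter_subset_right)
  have hAunion : K = ⋃ i : Fin k, A i := by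
    apply Set.eq_of_subset_of_subset
    · intro x hx
      have hx2 : x ∈ ⋃ m : ℕ, f m := by
        obtain ⟨z0, hz0t, hz0b⟩ := Set.mem_iUnion₂.mp (ht hx)
        have hidx : (t.equivFin ⟨z0, hz0t⟩ : ℕ) < k := (t.equivFin ⟨z0, hz0t⟩).isLt
        refine Set.mem_iUnion.mpr ⟨t.equivFin ⟨z0, hz0t⟩, ?_⟩
        rw [hfdef]
        simp only [hidx, dif_pos]
        constructor
        · exact hx
        · have : zz ⟨(t.equivFin ⟨z0, hz0t⟩ : ℕ), hidx⟩ = z0 := by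
            rw [hzz]
            congr 1
            rw [Fin.eta]
            exact congrArg Subtype.val (t.equivFin.symm_apply_apply ⟨z0, hz0t⟩)
          rw [this]
          exact hz0b
      rw [← iUnion_disjointed] at hx2
      obtain ⟨m, hm⟩ := Set.mem_iUnion.mp hx2
      have hmk : m < k := by
        by_contra hmk
        have hfe : f m = ∅ := by rw [hfdef]; simp [hmk]
        have hxe : x ∈ f m := (disjointed_subset f m) hm
        rw [hfe] at hxe
        exact Set.notMem_empty x hxe
      exact Set.mem_iUnion.mpr ⟨⟨m, hmk⟩, hm⟩
    · exact Set.iUnion_subset (fun i => hAK i)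
  -- coefficients
  set aP : Fin k → ℝ := fun i => ∫ z in A i, (ψ p z.2)⁻¹ ∂P with haP
  set aN : Fin k → ℝ := fun i => ∫ z in A i, (ψ p z.2)⁻¹ ∂N with haN
  set a : Fin k → ℝ := fun i => aP i - aN i with ha
  set cc : Fin k → ℝ := fun i => a i * ψ p (zz i).2 with hcc
  set ν : SignedMeasure (Sph d × ℝ) :=
    ∑ i, (cc i) • (Measure.dirac (zz i)).toSignedMeasure with hν
  have hψc : Continuous (fun z : Sph d × ℝ => (ψ p z.2)⁻¹) := measurable_psi_inv d p
  have hψm : Measurable (fun z : Sph d × ℝ => (ψ p z.2)⁻¹) := hψc.measurable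
  have hψint : ∀ (m : Measure (Sph d × ℝ)) [IsFiniteMeasure m],
      Integrable (fun z : Sph d × ℝ => (ψ p z.2)⁻¹) m := fun m _ =>
    integrable_of_bdd m hψm.aestronglyMeasurable (fun z => abs_psi_inv_le p z.2)
  have haPnn : ∀ i, 0 ≤ aP i := fun i =>
    setIntegral_nonneg (hAm i) (fun z _ => psi_inv_nonneg p z.2)
  have haNnn : ∀ i, 0 ≤ aN i := fun i =>
    setIntegral_nonneg (hAm i) (fun z _ => psi_inv_nonneg p z.2)
  -- sum of cell masses is at most the weighted norm
  have hwnorm : wnorm d p μ = (∫ z : Sph d × ℝ, (ψ p z.2)⁻¹ ∂P)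
      + (∫ z : Sph d × ℝ, (ψ p z.2)⁻¹ ∂N) := by
    rw [wnorm, show μ.totalVariation = P + N from rfl, integral_add_measure (hψint P) (hψint N)]
  have hKeq : K = ⋃ i ∈ (Finset.univ : Finset (Fin k)), A i := by
    rw [hAunion]; ext y; simp
  have hsumP : ∑ i, aP i = ∫ z in K, (ψ p z.2)⁻¹ ∂P := by
    rw [hKeq, integral_biUnion_finset Finset.univ (fun i _ => hAm i)
      (fun i _ j _ hij => hAdis hij) (fun i _ => (hψint P).integrableOn)]
  have hsumN : ∑ i, aN i = ∫ z in K, (ψ p z.2)⁻¹ ∂N := by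
    rw [hKeq, integral_biUnion_finset Finset.univ (fun i _ => hAm i)
      (fun i _ j _ hij => hAdis hij) (fun i _ => (hψint N).integrableOn)]
  have hcellsum : ∑ i, (aP i + aN i) ≤ wnorm d p μ := by
    rw [Finset.sum_add_distrib, hsumP, hsumN, hwnorm]
    apply add_le_add
    · exact setIntegral_le_integral (hψint P)
        (Filter.Eventually.of_forall (fun z => psi_inv_nonneg p z.2))
    · exact setIntegral_le_integral (hψint N)
        (Filter.Eventually.of_forall (fun z => psi_inv_nonneg p z.2))
  have hwnn : 0 ≤ wnorm d p μ := by
    rw [wnorm]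
    exact integral_nonneg (fun z => psi_inv_nonneg p z.2)
  refine ⟨ν, ⟨k, a, zz, rfl⟩, ?_, ?_⟩
  · -- norm bound
    rw [show wnorm d p ν = ∫ z : Sph d × ℝ, (ψ p z.2)⁻¹ ∂ν.totalVariation from rfl, hν,
      integral_totalVariation_discrete cc zz hinj hψm]
    have : ∀ i, |cc i| * (ψ p (zz i).2)⁻¹ = |a i| := by
      intro i
      rw [hcc]
      rw [abs_mul, abs_of_pos (psi_pos p (zz i).2), mul_assoc,
        mul_inv_cancel₀ (psi_pos p (zz i).2).ne', mul_one]
    rw [Finset.sum_congr rfl (fun i _ => this i)]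
    refine le_trans (Finset.sum_le_sum (fun i _ => ?_)) hcellsum
    rw [ha]
    exact (abs_sub _ _).trans (by rw [abs_of_nonneg (haPnn i), abs_of_nonneg (haNnn i)])
  · -- pointwise error bound
    intro x
    set g := gfun d p x with hg
    set G := Gfun d p x with hG
    have hgm : Measurable g := (continuous_gfun d p x).measurable
    have hgint : ∀ (m : Measure (Sph d × ℝ)) [IsFiniteMeasure m], Integrable g m := fun m _ =>
      integrable_of_bdd m hgm.aestronglyMeasurable (fun z => abs_gfun_le d p x z)
    set ε : ℝ := p * (‖x‖ + ((n:ℝ)+1)) ^ (p-1) * (‖x‖ + 2) * η with hε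
    have hεnn : 0 ≤ ε := by positivity
    -- oscillation bound on each cell
    have hosc : ∀ i, ∀ z ∈ A i, |G z - G (zz i)| ≤ ε := by
      intro i z hz
      have hzK : z ∈ K := hAK i hz
      have hzb : dist z (zz i) < η := hAball i hz
      have h2 : |z.2 - (zz i).2| ≤ dist z (zz i) := by
        rw [Prod.dist_eq, ← Real.dist_eq]
        exact le_max_right _ _
      have hzn : |z.2| ≤ (n:ℝ) + 1 := le_trans hzK (by linarith)
      have hzin : |(zz i).2| ≤ (n:ℝ) + 1 := by
        have : |(zz i).2| ≤ |z.2| + |z.2 - (zz i).2| := by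
          rw [← abs_neg (z.2 - (zz i).2)]
          calc |(zz i).2| = |z.2 + -(z.2 - (zz i).2)| := by ring_nf
            _ ≤ |z.2| + |(-(z.2 - (zz i).2))| := abs_add_le _ _
        have hK2 : |z.2| ≤ (n:ℝ) := hzK
        linarith [h2.trans hzb.le, hη1]
      calc |G z - G (zz i)| ≤ p * (‖x‖ + ((n:ℝ)+1)) ^ (p-1) * (‖x‖ + 2) * dist z (zz i) :=
            abs_Gfun_sub_le d p x (by positivity) hzn hzin
        _ ≤ ε := by
            rw [hε]
            exact mul_le_mul_of_nonneg_left hzb.le (by positivity)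
    -- per-cell error
    have hGg : ∀ z : Sph d × ℝ, (ψ p z.2)⁻¹ * G z = g z := by
      intro z
      rw [hg, gfun, div_eq_mul_inv, hG]; ring
    have hbd1 : ∀ i z, |(ψ p z.2)⁻¹ * (G (zz i) - G z)| ≤ |G (zz i)| + Cb p x := by
      intro i z
      rw [mul_sub]
      calc |(ψ p z.2)⁻¹ * G (zz i) - (ψ p z.2)⁻¹ * G z|
          ≤ |(ψ p z.2)⁻¹ * G (zz i)| + |(ψ p z.2)⁻¹ * G z| := abs_sub _ _
        _ ≤ |G (zz i)| + Cb p x := by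
            apply add_le_add
            · rw [abs_mul]
              calc |(ψ p z.2)⁻¹| * |G (zz i)| ≤ 1 * |G (zz i)| :=
                  mul_le_mul_of_nonneg_right (abs_psi_inv_le p z.2) (abs_nonneg _)
                _ = |G (zz i)| := one_mul _
            · rw [hGg z]
              exact abs_gfun_le d p x z
    have hmeas1 : ∀ i, Measurable (fun z : Sph d × ℝ => (ψ p z.2)⁻¹ * (G (zz i) - G z)) := by
      intro i
      exact hψm.mul (measurable_const.sub (continuous_Gfun d p x).measurable)
    have hcell : ∀ (m : Measure (Sph d × ℝ)), IsFiniteMeasure m → ∀ i,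
        |(∫ z in A i, (ψ p z.2)⁻¹ ∂m) * G (zz i) - ∫ z in A i, g z ∂m|
          ≤ ε * ∫ z in A i, (ψ p z.2)⁻¹ ∂m := by
      intro m hm i
      have hrw : (∫ z in A i, (ψ p z.2)⁻¹ ∂m) * G (zz i) - ∫ z in A i, g z ∂m
          = ∫ z in A i, (ψ p z.2)⁻¹ * (G (zz i) - G z) ∂m := by
        have h2 : (∫ z in A i, (ψ p z.2)⁻¹ * (G (zz i) - G z) ∂m)
            = ∫ z in A i, ((ψ p z.2)⁻¹ * G (zz i) - g z) ∂m := by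
          apply integral_congr_ae
          refine Filter.Eventually.of_forall (fun z => ?_)
          show (ψ p z.2)⁻¹ * (G (zz i) - G z) = (ψ p z.2)⁻¹ * G (zz i) - g z
          rw [← hGg z]
          ring
        rw [h2, integral_sub, integral_mul_const]
        · apply Integrable.integrableOn
          apply integrable_of_bdd m ((hψm.mul_const _).aestronglyMeasurable)
            (C := |G (zz i)|)
          intro z
          rw [abs_mul]
          calc |(ψ p z.2)⁻¹| * |G (zz i)| ≤ 1 * |G (zz i)| :=
              mul_le_mul_of_nonneg_right (abs_psi_inv_le p z.2) (abs_nonneg _)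
            _ = |G (zz i)| := one_mul _
        · exact (hgint m).integrableOn
      rw [hrw]
      calc |∫ z in A i, (ψ p z.2)⁻¹ * (G (zz i) - G z) ∂m|
          ≤ ∫ z in A i, |(ψ p z.2)⁻¹ * (G (zz i) - G z)| ∂m := by
            have := norm_integral_le_integral_norm (μ := m.restrict (A i))
              (f := fun z : Sph d × ℝ => (ψ p z.2)⁻¹ * (G (zz i) - G z))
            simpa only [Real.norm_eq_abs] using this
        _ ≤ ∫ z in A i, ε * (ψ p z.2)⁻¹ ∂m := by
            apply setIntegral_mono_on
            · apply Integrable.integrableOn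
              exact integrable_of_bdd m ((hmeas1 i).abs.aestronglyMeasurable)
                (C := |G (zz i)| + Cb p x) (fun z => by rw [abs_abs]; exact hbd1 i z)
            · exact ((hψint m).const_mul ε).integrableOn
            · exact hAm i
            · intro z hz
              rw [abs_mul, abs_of_nonneg (psi_inv_nonneg p z.2), mul_comm ε]
              apply mul_le_mul_of_nonneg_left _ (psi_inv_nonneg p z.2)
              rw [abs_sub_comm]
              exact hosc i z hz
        _ = ε * ∫ z in A i, (ψ p z.2)⁻¹ ∂m := integral_const_mul ε _
    -- splitting the integrals
    have hsplit : ∀ (m : Measure (Sph d × ℝ)) [IsFiniteMeasure m],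
        ∫ z, g z ∂m = (∑ i, ∫ z in A i, g z ∂m) + ∫ z in Kᶜ, g z ∂m := by
      intro m hm
      rw [← integral_add_compl hKm (hgint m)]
      congr 1
      rw [hKeq, integral_biUnion_finset Finset.univ (fun i _ => hAm i)
        (fun i _ j _ hij => hAdis hij) (fun i _ => (hgint m).integrableOn)]
    have e1 : sintegral ν g = ∑ i, a i * G (zz i) := by
      rw [hν, sintegral_discrete cc zz hinj hgm]
      apply Finset.sum_congr rfl
      intro i _
      rw [hcc]
      have : ψ p (zz i).2 * g (zz i) = G (zz i) := by
        rw [← hGg (zz i), ← mul_assoc, mul_inv_cancel₀ (psi_pos p (zz i).2).ne', one_mul]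
      rw [mul_assoc, this]
    have e2 : sintegral μ g = ((∑ i, ∫ z in A i, g z ∂P) + ∫ z in Kᶜ, g z ∂P)
        - ((∑ i, ∫ z in A i, g z ∂N) + ∫ z in Kᶜ, g z ∂N) := by
      rw [sintegral, ← hP, ← hN, hsplit P, hsplit N]
    have haG : ∑ i, a i * G (zz i)
        = (∑ i, aP i * G (zz i)) - ∑ i, aN i * G (zz i) := by
      rw [← Finset.sum_sub_distrib]
      exact Finset.sum_congr rfl (fun i _ => sub_mul _ _ _)
    have heq : sintegral ν g - sintegral μ g =
        ((∑ i, aP i * G (zz i)) - ∑ i, ∫ z in A i, g z ∂P)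
        - ((∑ i, aN i * G (zz i)) - ∑ i, ∫ z in A i, g z ∂N)
        - (∫ z in Kᶜ, g z ∂P) + (∫ z in Kᶜ, g z ∂N) := by
      rw [e1, e2, haG]; ring
    -- tail bound
    have htail : ∀ (m : Measure (Sph d × ℝ)) [IsFiniteMeasure m],
        |∫ z in Kᶜ, g z ∂m| ≤ Cb p x * (m Kᶜ).toReal := by
      intro m hm
      calc |∫ z in Kᶜ, g z ∂m| ≤ ∫ z in Kᶜ, |g z| ∂m := by
            have := norm_integral_le_integral_norm (μ := m.restrict Kᶜ) (f := g)
            simpa only [Real.norm_eq_abs] using this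
        _ ≤ ∫ _z in Kᶜ, Cb p x ∂m := by
            apply setIntegral_mono_on
            · exact (integrable_of_bdd m hgm.abs.aestronglyMeasurable
                (fun z => by rw [abs_abs]; exact abs_gfun_le d p x z)).integrableOn
            · exact (integrable_const _).integrableOn
            · exact hKm.compl
            · exact fun z _ => abs_gfun_le d p x z
        _ = (m Kᶜ).toReal * Cb p x := by rw [setIntegral_const, smul_eq_mul, measureReal_def]
        _ = Cb p x * (m Kᶜ).toReal := mul_comm _ _
    -- cell sums bound
    have hcells : |((∑ i, aP i * G (zz i)) - ∑ i, ∫ z in A i, g z ∂P)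
        - ((∑ i, aN i * G (zz i)) - ∑ i, ∫ z in A i, g z ∂N)|
        ≤ ε * wnorm d p μ := by
      have hParts : ∀ (m : Measure (Sph d × ℝ)) [IsFiniteMeasure m],
          |(∑ i, (∫ z in A i, (ψ p z.2)⁻¹ ∂m) * G (zz i)) - ∑ i, ∫ z in A i, g z ∂m|
            ≤ ∑ i, ε * ∫ z in A i, (ψ p z.2)⁻¹ ∂m := by
        intro m hm
        rw [← Finset.sum_sub_distrib]
        exact (Finset.abs_sum_le_sum_abs _ _).trans
          (Finset.sum_le_sum (fun i _ => hcell m hm i))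
      have hbP := hParts P
      have hbN := hParts N
      calc |((∑ i, aP i * G (zz i)) - ∑ i, ∫ z in A i, g z ∂P)
          - ((∑ i, aN i * G (zz i)) - ∑ i, ∫ z in A i, g z ∂N)|
          ≤ |(∑ i, aP i * G (zz i)) - ∑ i, ∫ z in A i, g z ∂P|
            + |(∑ i, aN i * G (zz i)) - ∑ i, ∫ z in A i, g z ∂N| := abs_sub _ _
        _ ≤ (∑ i, ε * aP i) + ∑ i, ε * aN i := add_le_add hbP hbN
        _ = ε * ∑ i, (aP i + aN i) := by
            rw [Finset.mul_sum]
            rw [← Finset.sum_add_distrib]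
            exact Finset.sum_congr rfl (fun i _ => by ring)
        _ ≤ ε * wnorm d p μ := mul_le_mul_of_nonneg_left hcellsum hεnn
    -- put everything together
    have hKc : Kᶜ = {z : Sph d × ℝ | (n:ℝ) < |z.2|} := by
      ext z; simp [hKdef, not_le]
    have htv : (μ.totalVariation {z : Sph d × ℝ | (n:ℝ) < |z.2|}).toReal
        = (P Kᶜ).toReal + (N Kᶜ).toReal := by
      rw [← hKc, show μ.totalVariation = P + N from rfl, Measure.add_apply,
        ENNReal.toReal_add (measure_ne_top P _) (measure_ne_top N _)]
    have hDle : |sintegral ν g - sintegral μ g|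
        ≤ ε * wnorm d p μ + Cb p x * (μ.totalVariation {z : Sph d × ℝ | (n:ℝ) < |z.2|}).toReal := by
      rw [heq, htv]
      calc |((∑ i, aP i * G (zz i)) - ∑ i, ∫ z in A i, g z ∂P)
          - ((∑ i, aN i * G (zz i)) - ∑ i, ∫ z in A i, g z ∂N)
          - (∫ z in Kᶜ, g z ∂P) + (∫ z in Kᶜ, g z ∂N)|
          ≤ |((∑ i, aP i * G (zz i)) - ∑ i, ∫ z in A i, g z ∂P)
            - ((∑ i, aN i * G (zz i)) - ∑ i, ∫ z in A i, g z ∂N)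
            - (∫ z in Kᶜ, g z ∂P)| + |∫ z in Kᶜ, g z ∂N| := abs_add_le _ _
        _ ≤ |((∑ i, aP i * G (zz i)) - ∑ i, ∫ z in A i, g z ∂P)
            - ((∑ i, aN i * G (zz i)) - ∑ i, ∫ z in A i, g z ∂N)|
            + |∫ z in Kᶜ, g z ∂P| + |∫ z in Kᶜ, g z ∂N| := by
            apply add_le_add_left
            exact abs_sub _ _
        _ ≤ ε * wnorm d p μ + Cb p x * (P Kᶜ).toReal + Cb p x * (N Kᶜ).toReal :=
            add_le_add (add_le_add hcells (htail P)) (htail N)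
        _ = ε * wnorm d p μ + Cb p x * ((P Kᶜ).toReal + (N Kᶜ).toReal) := by ring
    refine hDle.trans (add_le_add_left ?_ _)
    -- ε ≤ coefficient / (n+1)
    have hεle : ε ≤ (p * (‖x‖ + 1) ^ (p-1) * (‖x‖ + 2)) * (1/((n:ℝ)+1)) := by
      have hbase : (‖x‖ + ((n:ℝ)+1)) ≤ (‖x‖ + 1) * ((n:ℝ)+1) := by
        have h0 : (0:ℝ) ≤ ‖x‖ := norm_nonneg x
        have h1 : (0:ℝ) ≤ (n:ℝ) := Nat.cast_nonneg n
        nlinarith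
      have hpow1 : (‖x‖ + ((n:ℝ)+1)) ^ (p-1) ≤ (‖x‖ + 1) ^ (p-1) * ((n:ℝ)+1) ^ (p-1) := by
        rw [← mul_pow]
        exact pow_le_pow_left₀ (by positivity) hbase _
      have hpowp : ((n:ℝ)+1) ^ p = ((n:ℝ)+1) ^ (p-1) * ((n:ℝ)+1) := by
        conv_lhs => rw [show p = (p-1)+1 from (Nat.succ_pred_eq_of_pos hp).symm]
        rw [pow_succ]
      have hne : ((n:ℝ)+1) ≠ 0 := by positivity
      have hne2 : ((n:ℝ)+1) ^ (p-1) ≠ 0 := by positivity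
      calc ε = p * (‖x‖ + ((n:ℝ)+1)) ^ (p-1) * (‖x‖ + 2) * (1/((n:ℝ)+1)^p) := by rw [hε, hηdef]
        _ ≤ p * ((‖x‖ + 1) ^ (p-1) * ((n:ℝ)+1) ^ (p-1)) * (‖x‖ + 2) * (1/((n:ℝ)+1)^p) := by
            apply mul_le_mul_of_nonneg_right _ (by positivity)
            apply mul_le_mul_of_nonneg_right _ (by positivity)
            exact mul_le_mul_of_nonneg_left hpow1 (Nat.cast_nonneg p)
        _ = (p * (‖x‖ + 1) ^ (p-1) * (‖x‖ + 2)) * (1/((n:ℝ)+1)) := by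
            rw [hpowp]
            field_simp
      
    calc ε * wnorm d p μ
        ≤ ((p * (‖x‖ + 1) ^ (p-1) * (‖x‖ + 2)) * (1/((n:ℝ)+1))) * wnorm d p μ :=
          mul_le_mul_of_nonneg_right hεle hwnn
      _ = (p * (‖x‖ + 1) ^ (p-1) * (‖x‖ + 2) * wnorm d p μ) * (1/((n:ℝ)+1)) := by ring
lemma tail_tendsto (d p : ℕ) (μ : SignedMeasure (Sph d × ℝ)) :
    Filter.Tendsto
      (fun n : ℕ => (μ.totalVariation {z : Sph d × ℝ | (n:ℝ) < |z.2|}).toReal)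
      Filter.atTop (nhds 0) := by
  haveI : IsFiniteMeasure μ.totalVariation :=
    inferInstanceAs (IsFiniteMeasure
      (μ.toJordanDecomposition.posPart + μ.toJordanDecomposition.negPart))
  set S : ℕ → Set (Sph d × ℝ) := fun n => {z | (n:ℝ) < |z.2|} with hS
  have hmeas : ∀ n, MeasurableSet (S n) := by
    intro n
    have : S n = (fun z : Sph d × ℝ => |z.2|) ⁻¹' (Set.Ioi (n:ℝ)) := rfl
    rw [this]
    exact ((_root_.continuous_abs.comp continuous_snd).measurable) measurableSet_Ioi
  have hmono : Antitone S := by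
    intro m n hmn z hz
    have : (m:ℝ) ≤ (n:ℝ) := Nat.cast_le.mpr hmn
    exact lt_of_le_of_lt this hz
  have hiInter : ⋂ n, S n = ∅ := by
    ext z
    simp only [Set.mem_iInter, Set.mem_empty_iff_false, iff_false, not_forall]
    obtain ⟨m, hm⟩ := exists_nat_gt |z.2|
    exact ⟨m, by simp [hS, not_lt.mpr hm.le]⟩
  have htend := tendsto_measure_iInter_atTop (μ := μ.totalVariation)
    (fun n => (hmeas n).nullMeasurableSet) hmono ⟨0, measure_ne_top _ _⟩
  rw [hiInter, measure_empty] at htend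
  have := (ENNReal.tendsto_toReal (a := 0) (by simp)).comp htend
  simpa [Function.comp_def] using this


/-- any infinite-width RePU network with monomial units is the pointwise
limit of finite-width networks given by discrete measures
`μ_n = ∑ aᵢ·ψ(bᵢ)·δ_{(wᵢ,bᵢ)}` whose weighted total variation norms never exceed that
of `μ`. -/
theorem stmt_14 (d p : ℕ) (hd : 1 ≤ d) (hp : 1 ≤ p)
    (μ : SignedMeasure (Sph d × ℝ)) (v : Fin p → EuclideanSpace ℝ (Fin d)) (c : ℝ) :
    ∃ μseq : ℕ → SignedMeasure (Sph d × ℝ),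
      (∀ n, ∃ (k : ℕ) (a : Fin k → ℝ) (z : Fin k → Sph d × ℝ),
        μseq n = ∑ i, (a i * ψ p (z i).2) • (Measure.dirac (z i)).toSignedMeasure) ∧
      (∀ n, wnorm d p (μseq n) ≤ wnorm d p μ) ∧
      (∀ x : EuclideanSpace ℝ (Fin d),
        Filter.Tendsto (fun n => Hfull d p (μseq n) v c x) Filter.atTop
          (nhds (Hfull d p μ v c x))) := by
  have hstep := fun n => step d p hp μ n
  choose ν hdisc hnorm herr using hstep
  refine ⟨ν, hdisc, hnorm, ?_⟩
  intro x
  rw [tendsto_iff_norm_sub_tendsto_zero]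
  have hHdiff : ∀ n, Hfull d p (ν n) v c x - Hfull d p μ v c x
      = sintegral (ν n) (gfun d p x) - sintegral μ (gfun d p x) := by
    intro n
    rw [Hfull, Hfull, Hnet_eq, Hnet_eq]
    ring
  have hb : Filter.Tendsto (fun n : ℕ =>
      (p * (‖x‖ + 1) ^ (p-1) * (‖x‖ + 2) * wnorm d p μ) * (1/((n:ℝ)+1))
      + Cb p x * (μ.totalVariation {z : Sph d × ℝ | (n:ℝ) < |z.2|}).toReal)
      Filter.atTop (nhds 0) := by
    have h1 := tendsto_one_div_add_atTop_nhds_zero_nat.const_mul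
      (p * (‖x‖ + 1) ^ (p-1) * (‖x‖ + 2) * wnorm d p μ)
    have h2 := (tail_tendsto d p μ).const_mul (Cb p x)
    simpa using h1.add h2
  apply squeeze_zero (fun n => norm_nonneg _) (fun n => ?_) hb
  rw [hHdiff n, Real.norm_eq_abs]
  exact herr n x
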